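/- arXiv:2510.01434 — 5 statements merged into one kernel-verified Lean document; each statement's English description precedes it below -/
import Mathlib

section
/- For a Bernoulli KL divergence, if 0 < p and p + γ ≤ 1 with 0 ≤ γ ≤ p, then D_{KL,2}(p ∥ p+γ) ≥ γ²/(4p), where D_{KL,2}(a∥b) = a log(a/b) + (1−a) log((1−a)/(1−b)). -/
open Real

/-- Binary (Bernoulli) KL divergence. -/
noncomputable def klBin (a b : ℝ) : ℝ :=
  a * Real.log (a / b) + (1 - a) * Real.log ((1 - a) / (1 - b))

lemma aux_hasDerivAt (z : ℝ) (hz0 : 0 < z) :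
    HasDerivAt (fun x : ℝ => x / 2 - 1 / (2 * x) - Real.log x)
      ((z - 1) ^ 2 / (2 * z ^ 2)) z := by
  have h2 : HasDerivAt (fun y : ℝ => 2 * y) 2 z := by
    simpa using (hasDerivAt_id z).const_mul 2
  have hinv : HasDerivAt (fun y : ℝ => 1 / (2 * y)) (-(2) / (2 * z) ^ 2) z := by
    rw [show (fun y : ℝ => 1 / (2 * y)) = (fun y => 2 * y)⁻¹ from by funext y; simp]
    exact h2.inv (by positivity : (2:ℝ) * z ≠ 0)
  have hd := (((hasDerivAt_id z).div_const 2).sub hinv).sub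
    (Real.hasDerivAt_log (ne_of_gt hz0))
  refine hd.congr_deriv ?_
  field_simp
  ring

lemma log_le_half_sub (x : ℝ) (hx : 1 ≤ x) : Real.log x ≤ x / 2 - 1 / (2 * x) := by
  set f : ℝ → ℝ := fun x => x / 2 - 1 / (2 * x) - Real.log x with hf
  have hmono : MonotoneOn f (Set.Ici (1:ℝ)) := by
    apply monotoneOn_of_deriv_nonneg (convex_Ici 1)
    · apply ContinuousOn.sub
      · apply ContinuousOn.sub
        · fun_prop
        · apply ContinuousOn.div continuousOn_const (by fun_prop)
          intro z hz
          have : (1:ℝ) ≤ z := hz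
          positivity
      · apply ContinuousOn.log (by fun_prop)
        intro z hz
        have : (1:ℝ) ≤ z := hz
        linarith
    · intro z hz
      simp only [interior_Ici, Set.mem_Ioi] at hz
      exact (aux_hasDerivAt z (by linarith)).differentiableAt.differentiableWithinAt
    · intro z hz
      simp only [interior_Ici, Set.mem_Ioi] at hz
      rw [(aux_hasDerivAt z (by linarith)).deriv]
      positivity
  have h1 : f 1 = 0 := by simp [hf]
  have := hmono Set.self_mem_Ici hx hx
  rw [h1] at this
  simpa [hf] using this

/-- For `p ∈ (0,1)`, `γ ∈ [0,p]` with `p + γ < 1`,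
`D_{KL,2}(p ∥ p+γ) ≥ (1/4)·γ²/p`. -/
theorem klBin_ge_quarter_gamma_sq_div_p (p γ : ℝ)
    (hp0 : 0 < p) (hp1 : p < 1) (hγ0 : 0 ≤ γ) (hγp : γ ≤ p) (hpγ : p + γ < 1) :
    (1 / 4) * γ ^ 2 / p ≤ klBin p (p + γ) := by
  have hpγ0 : 0 < p + γ := by linarith
  have h1p : 0 < 1 - p := by linarith
  have h1pγ : 0 < 1 - (p + γ) := by linarith
  set A := Real.log ((p + γ) / p) with hA
  set B := Real.log ((1 - p) / (1 - (p + γ))) with hB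
  have hkl : klBin p (p + γ) = -(p * A) + (1 - p) * B := by
    unfold klBin
    rw [hA, hB, Real.log_div (ne_of_gt hpγ0) (ne_of_gt hp0),
        Real.log_div (ne_of_gt hp0) (ne_of_gt hpγ0)]
    ring
  -- bound on A
  have hx1 : (1:ℝ) ≤ (p + γ) / p := by
    rw [le_div_iff₀ hp0]; linarith
  have hAle : A ≤ (p + γ) / (2 * p) - p / (2 * (p + γ)) := by
    have h := log_le_half_sub ((p + γ) / p) hx1
    rw [← hA] at h
    have e1 : (p + γ) / p / 2 = (p + γ) / (2 * p) := by ring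
    have e2 : 1 / (2 * ((p + γ) / p)) = p / (2 * (p + γ)) := by field_simp
    rw [e1, e2] at h
    exact h
  -- bound on B
  have hBge : γ / (1 - p) ≤ B := by
    have h := Real.log_le_sub_one_of_pos
      (show 0 < (1 - (p + γ)) / (1 - p) by positivity)
    have hrec : B = -Real.log ((1 - (p + γ)) / (1 - p)) := by
      rw [hB, ← Real.log_inv]
      congr 1
      field_simp
    have e : (1 - (p + γ)) / (1 - p) - 1 = -(γ / (1 - p)) := by
      field_simp; ring
    rw [e] at h
    rw [hrec]
    linarith
  rw [hkl]
  -- combine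
  have h1 : -((p + γ) / 2) + p ^ 2 / (2 * (p + γ)) ≤ -(p * A) := by
    have hmul : p * A ≤ p * ((p + γ) / (2 * p) - p / (2 * (p + γ))) :=
      mul_le_mul_of_nonneg_left hAle (le_of_lt hp0)
    have e : p * ((p + γ) / (2 * p) - p / (2 * (p + γ)))
        = (p + γ) / 2 - p ^ 2 / (2 * (p + γ)) := by
      field_simp
    rw [e] at hmul
    linarith
  have h2 : γ ≤ (1 - p) * B := by
    have h := mul_le_mul_of_nonneg_left hBge (le_of_lt h1p)
    have e : (1 - p) * (γ / (1 - p)) = γ := by field_simp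
    rw [e] at h
    exact h
  have e3 : γ ^ 2 / (2 * (p + γ)) = γ - ((p + γ) / 2 - p ^ 2 / (2 * (p + γ))) := by
    field_simp; ring
  have key : γ ^ 2 / (2 * (p + γ)) ≤ -(p * A) + (1 - p) * B := by
    rw [e3]; linarith
  have final : (1 / 4) * γ ^ 2 / p ≤ γ ^ 2 / (2 * (p + γ)) := by
    rw [div_le_div_iff₀ hp0 (by positivity)]
    nlinarith [sq_nonneg γ, mul_nonneg (mul_nonneg hγ0 hγ0) hγ0]
  linarith
end

section
/- In the flower game, action a_i is optimal for the receiver at belief y if and only if y_i ≥ y_j for all j ≠ i and y_j ≥ τ for all j ≠ i. -/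
open Real Finset

/-- Standard basis vector `e_i` in `ℝⁿ`. -/
def eVec (n : ℕ) (i : Fin n) : Fin n → ℝ := fun ω => if ω = i then 1 else 0

/-- Receiver utility vector of action `a_j` in the flower game. -/
def uRsimple (n : ℕ) (j : Fin n) : Fin n → ℝ := eVec n j

/-- Receiver utility vector of action `a_{(jk)}` (`j ≠ k`) in the flower game:
`e_j + τ·𝟏 − e_k`. -/
def uRpair (n : ℕ) (τ : ℝ) (j k : Fin n) : Fin n → ℝ :=
  fun ω => eVec n j ω + τ - eVec n k ω

lemma sum_simple (n : ℕ) (j : Fin n) (y : Fin n → ℝ) :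
    ∑ ω, uRsimple n j ω * y ω = y j := by
  simp [uRsimple, eVec, ite_mul]

lemma sum_pair (n : ℕ) (τ : ℝ) (j k : Fin n) (y : Fin n → ℝ) (hy1 : ∑ ω, y ω = 1) :
    ∑ ω, uRpair n τ j k ω * y ω = y j + τ - y k := by
  have : ∀ ω, uRpair n τ j k ω * y ω =
      uRsimple n j ω * y ω + τ * y ω - uRsimple n k ω * y ω := by
    intro ω; simp [uRpair, uRsimple]; ring
  rw [Finset.sum_congr rfl fun ω _ => this ω]
  rw [Finset.sum_sub_distrib, Finset.sum_add_distrib, sum_simple, sum_simple,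
    ← Finset.mul_sum, hy1, mul_one]

/-- Characterization of receiver-optimal actions in the flower game: `a_i` is
optimal at belief `y` iff `y i ≥ y j` for all `j ≠ i` and `y j ≥ τ` for all `j ≠ i`. -/
theorem flower_actOptCharac (n : ℕ) (hn : 2 ≤ n) (τ : ℝ)
    (hτ0 : 0 ≤ τ) (hτn : τ ≤ 1 / n)
    (y : Fin n → ℝ) (hy0 : ∀ ω, 0 ≤ y ω) (hy1 : ∑ ω, y ω = 1) (i : Fin n) :
    ((∀ j, ∑ ω, uRsimple n j ω * y ω ≤ ∑ ω, uRsimple n i ω * y ω) ∧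
      (∀ j k, j ≠ k → ∑ ω, uRpair n τ j k ω * y ω ≤ ∑ ω, uRsimple n i ω * y ω))
      ↔ ((∀ j, j ≠ i → y j ≤ y i) ∧ (∀ j, j ≠ i → τ ≤ y j)) := by
  simp only [sum_simple, fun j k => sum_pair n τ j k y hy1]
  constructor
  · rintro ⟨h1, h2⟩
    refine ⟨fun j _ => h1 j, fun j hj => ?_⟩
    have := h2 i j hj.symm
    linarith
  · rintro ⟨h1, h2⟩
    constructor
    · intro j
      by_cases hj : j = i
      · simp [hj]
      · exact h1 j hj
    · intro j k hjk
      by_cases hk : k = i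
      · subst hk
        have := h1 j hjk
        have := h2 j hjk
        linarith
      · have hk' := h2 k hk
        by_cases hj : j = i
        · subst hj; linarith
        · have := h1 j hj; linarith
end

section
/- In the flower game G^{1/(2(n−1)), n}, the optimal known-commitment sender value is 1/2: the scheme with n signals, posterior for signal i putting mass 1 − (n−1)τ = 1/2 on state i and τ on each other state, with each signal sent with probability 1/n, achieves BPR = 1/2, and no scheme achieves more. -/
open Real Finset
open scoped Classical

/-- In the flower game with parameter `τ`, action `a_i` is receiver-optimal for the
posterior induced by signal `s` of the joint state–signal distribution `P`
(conditions stated scale-invariantly in terms of the joint distribution, cf. the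
characterization of Lemma `actOptCharac`). -/
def FlowerOpt {n m : ℕ} (τ : ℝ) (P : Fin n → Fin m → ℝ) (i : Fin n) (s : Fin m) : Prop :=
  (∀ j, P j s ≤ P i s) ∧ (∀ j, j ≠ i → τ * (∑ ω, P ω s) ≤ P j s)

/-- The sender's known-commitment expected value in the flower game for the scheme
with joint state–signal distribution `P`: on each signal, if some action `a_i` is
receiver-optimal, ties are broken in the sender's favor, yielding value
`max_i P i s`; signals inducing only actions `a_{(jk)}` give the sender nothing. -/
noncomputable def flowerBPR {n m : ℕ} (τ : ℝ) (P : Fin n → Fin m → ℝ) : ℝ :=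
  ∑ s, if ∃ i, FlowerOpt τ P i s then (⨆ i, P i s) else 0


/-- In the flower game `G^{1/(2(n−1)), n}` with uniform prior, the optimal
known-commitment sender value over all signaling schemes (joint distributions `P`
with uniform state marginal, over any finite signal set) is exactly `1/2`. -/
theorem flower_optimal_value (n : ℕ) (hn : 2 ≤ n) :
    IsGreatest
      {v : ℝ | ∃ (m : ℕ) (P : Fin n → Fin m → ℝ),
        (∀ ω s, 0 ≤ P ω s) ∧ (∀ ω, ∑ s, P ω s = 1 / n) ∧
        v = flowerBPR (1 / (2 * ((n : ℝ) - 1))) P}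
      (1 / 2) := by
  haveI : Nonempty (Fin n) := ⟨⟨0, by omega⟩⟩
  have hn1 : (1 : ℝ) ≤ (n : ℝ) - 1 := by
    have : (2 : ℝ) ≤ (n : ℝ) := by exact_mod_cast hn
    linarith
  have hn1' : (0 : ℝ) < (n : ℝ) - 1 := by linarith
  have hnpos : (0 : ℝ) < (n : ℝ) := by linarith
  set τ : ℝ := 1 / (2 * ((n : ℝ) - 1)) with hτdef
  have hτpos : 0 < τ := by positivity
  have hτhalf : ((n : ℝ) - 1) * τ = 1 / 2 := by
    rw [hτdef]; field_simp
  have hcast : ((n - 1 : ℕ) : ℝ) = (n : ℝ) - 1 := by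
    have h1 : 1 ≤ n := by omega
    push_cast [h1]; ring
  constructor
  · -- membership: explicit scheme
    refine ⟨n, fun ω s => if ω = s then 1 / (2 * n) else τ / n, ?_, ?_, ?_⟩
    · intro ω s
      dsimp only
      split <;> positivity
    · intro ω
      dsimp only
      rw [← Finset.add_sum_erase _ _ (Finset.mem_univ ω)]
      have h1 : ∑ s ∈ Finset.univ.erase ω,
          (if ω = s then 1 / (2 * (n:ℝ)) else τ / n) = ((n : ℝ) - 1) * (τ / n) := by
        rw [Finset.sum_congr rfl (fun s hs => if_neg
          (fun h => (Finset.mem_erase.mp hs).1 h.symm)), Finset.sum_const,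
          Finset.card_erase_of_mem (Finset.mem_univ ω), Finset.card_univ,
          Fintype.card_fin, nsmul_eq_mul, hcast]
      have h2 : ((n : ℝ) - 1) * (τ / n) = 1 / 2 / n := by
        rw [← hτhalf]; ring
      rw [h1, h2, if_pos rfl]
      field_simp
      norm_num
    · -- compute BPR
      have hsum : ∀ s : Fin n, ∑ ω, (if ω = s then 1 / (2 * (n:ℝ)) else τ / n) = 1 / n := by
        intro s
        rw [← Finset.add_sum_erase _ _ (Finset.mem_univ s), if_pos rfl]
        have h1 : ∑ ω ∈ Finset.univ.erase s,
            (if ω = s then 1 / (2 * (n:ℝ)) else τ / n) = ((n : ℝ) - 1) * (τ / n) := by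
          rw [Finset.sum_congr rfl (fun ω hω => if_neg (Finset.mem_erase.mp hω).1),
            Finset.sum_const, Finset.card_erase_of_mem (Finset.mem_univ s),
            Finset.card_univ, Fintype.card_fin, nsmul_eq_mul, hcast]
        have h2 : ((n : ℝ) - 1) * (τ / n) = 1 / 2 / n := by
          rw [← hτhalf]; ring
        rw [h1, h2]
        field_simp
        norm_num
      have hτle : τ ≤ 1 / 2 := by
        nlinarith
      have hopt : ∀ s : Fin n,
          FlowerOpt τ (fun ω t => if ω = t then 1 / (2 * (n:ℝ)) else τ / n) s s := by
        intro s
        constructor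
        · intro j
          dsimp only
          rw [if_pos rfl]
          by_cases hj : j = s
          · rw [if_pos hj]
          · rw [if_neg hj, div_le_div_iff₀ hnpos (by positivity)]
            nlinarith
        · intro j hj
          dsimp only
          rw [hsum s, if_neg hj, mul_one_div]
      have hsup : ∀ s : Fin n,
          (⨆ i, (fun ω t => if ω = t then 1 / (2 * (n:ℝ)) else τ / n) i s) = 1 / (2 * n) := by
        intro s
        apply le_antisymm
        · apply ciSup_le
          intro j
          have := (hopt s).1 j
          simpa using this
        · have := le_ciSup (f := fun i : Fin n =>
            (fun ω t => if ω = t then 1 / (2 * (n:ℝ)) else τ / n) i s)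
            (Set.finite_range _).bddAbove s
          simpa using this
      simp only [flowerBPR]
      rw [Finset.sum_congr rfl (fun s _ => by rw [if_pos ⟨s, hopt s⟩, hsup s]),
        Finset.sum_const, Finset.card_univ, Fintype.card_fin, nsmul_eq_mul]
      field_simp
  · -- upper bound
    rintro v ⟨m, P, hP0, hPmarg, rfl⟩
    have key : ∀ s : Fin m,
        (if ∃ i, FlowerOpt τ P i s then (⨆ i, P i s) else 0) ≤ (∑ ω, P ω s) / 2 := by
      intro s
      split
      · next h =>
        obtain ⟨i, hi1, hi2⟩ := h
        have hsup : (⨆ j, P j s) ≤ P i s := ciSup_le hi1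
        refine hsup.trans ?_
        set T := ∑ ω, P ω s with hT
        have hrest : ∑ ω ∈ Finset.univ.erase i, P ω s ≥ ((n:ℝ) - 1) * (τ * T) := by
          calc ∑ ω ∈ Finset.univ.erase i, P ω s
              ≥ ∑ _ω ∈ Finset.univ.erase i, τ * T := by
                apply Finset.sum_le_sum
                intro j hj
                exact hi2 j (Finset.mem_erase.mp hj).1
            _ = ((n:ℝ) - 1) * (τ * T) := by
                rw [Finset.sum_const, Finset.card_erase_of_mem (Finset.mem_univ i),
                  Finset.card_univ, Fintype.card_fin, nsmul_eq_mul, hcast]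
        have h3 : ((n:ℝ) - 1) * (τ * T) = T / 2 := by
          rw [← mul_assoc, hτhalf]; ring
        have hTsplit : T = P i s + ∑ ω ∈ Finset.univ.erase i, P ω s :=
          (Finset.add_sum_erase _ _ (Finset.mem_univ i)).symm
        linarith
      · next h =>
        have : 0 ≤ ∑ ω, P ω s := Finset.sum_nonneg fun ω _ => hP0 ω s
        linarith
    calc flowerBPR τ P ≤ ∑ s, (∑ ω, P ω s) / 2 := Finset.sum_le_sum fun s _ => key s
      _ = (∑ ω, ∑ s, P ω s) / 2 := by rw [Finset.sum_comm, ← Finset.sum_div]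
      _ = 1 / 2 := by
          rw [Finset.sum_congr rfl fun ω _ => hPmarg ω, Finset.sum_const,
            Finset.card_univ, Fintype.card_fin, nsmul_eq_mul]
          field_simp
end

section
/- Marginal signal probability bound: if π is an ε-optimal scheme in the flower game G^{1/(2(n−1)), n} (i.e., BPR(π) ≥ 1/2 − ε), then every signal s that induces an action in {a_1,…,a_n} has marginal probability p^π(s) ≤ 2(1/n + ε). -/
open Real Finset
open scoped Classical

/-- Marginal signal probability bound (Lemma `probBound`): if the scheme `P`
(joint state–signal distribution with uniform state marginal) is `ε`-optimal in
the flower game `G^{1/(2(n−1)), n}`, then every signal whose posterior makes some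
action `a_i` optimal has marginal probability at most `2(1/n + ε)`. -/
theorem flower_signal_prob_bound (n m : ℕ) (hn : 2 ≤ n) (ε : ℝ) (hε : 0 ≤ ε)
    (P : Fin n → Fin m → ℝ)
    (hP0 : ∀ ω s, 0 ≤ P ω s) (hPμ : ∀ ω, ∑ s, P ω s = 1 / n)
    (hopt : 1 / 2 - ε ≤ flowerBPR (1 / (2 * ((n : ℝ) - 1))) P) :
    ∀ s : Fin m, (∃ i, FlowerOpt (1 / (2 * ((n : ℝ) - 1))) P i s) →
      ∑ ω, P ω s ≤ 2 * (1 / n + ε) := by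
  classical
  haveI : Nonempty (Fin n) := ⟨⟨0, by omega⟩⟩
  set τ : ℝ := 1 / (2 * ((n : ℝ) - 1)) with hτ
  have hn2 : (2:ℝ) ≤ (n:ℝ) := by exact_mod_cast hn
  have hn1 : (0:ℝ) < (n:ℝ) - 1 := by linarith
  have hτkey : τ * ((n:ℝ) - 1) = 1/2 := by
    rw [hτ]; field_simp
  have hnpos : (0:ℝ) < n := by linarith
  -- sup bound by half the marginal
  have hsup : ∀ s, (∃ i, FlowerOpt τ P i s) → (⨆ i, P i s) ≤ (∑ ω, P ω s) / 2 := by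
    intro s hs
    obtain ⟨i, hmax, hlow⟩ := hs
    have hcard : ((Finset.univ.erase i).card : ℝ) = (n:ℝ) - 1 := by
      rw [Finset.card_erase_of_mem (Finset.mem_univ i), Finset.card_univ, Fintype.card_fin]
      push_cast [Nat.cast_sub (by omega : 1 ≤ n)]
      ring
    have hlb : ((n:ℝ) - 1) * (τ * ∑ ω, P ω s) ≤ ∑ j ∈ Finset.univ.erase i, P j s := by
      have := Finset.card_nsmul_le_sum (Finset.univ.erase i) (fun j => P j s)
        (τ * ∑ ω, P ω s) (by
          intro j hj
          exact hlow j (Finset.ne_of_mem_erase hj))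
      rw [nsmul_eq_mul, hcard] at this
      exact this
    have hsplit : P i s + ∑ j ∈ Finset.univ.erase i, P j s = ∑ ω, P ω s :=
      Finset.add_sum_erase Finset.univ (fun j => P j s) (Finset.mem_univ i)
    have hPi : P i s ≤ (∑ ω, P ω s) / 2 := by
      have h2 : ((n:ℝ) - 1) * (τ * ∑ ω, P ω s) = (∑ ω, P ω s) / 2 := by
        rw [← mul_assoc, mul_comm ((n:ℝ)-1) τ, hτkey]; ring
      linarith [hlb, hsplit]
    exact ciSup_le fun j => le_trans (hmax j) hPi
  -- sup bound by 1/n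
  have hsup1 : ∀ s, (⨆ i, P i s) ≤ 1 / (n:ℝ) := by
    intro s
    refine ciSup_le fun j => ?_
    calc P j s ≤ ∑ t, P j t :=
          Finset.single_le_sum (fun t _ => hP0 j t) (Finset.mem_univ s)
      _ = 1 / n := hPμ j
  -- total mass
  have htot : ∑ s, ∑ ω, P ω s = 1 := by
    rw [Finset.sum_comm]
    have : ∀ ω : Fin n, ∑ s, P ω s = 1 / n := hPμ
    rw [Finset.sum_congr rfl fun ω _ => hPμ ω, Finset.sum_const, Finset.card_univ,
      Fintype.card_fin, nsmul_eq_mul]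
    field_simp
  intro s0 hs0
  have hsplitσ : (∑ ω, P ω s0) + ∑ s ∈ Finset.univ.erase s0, ∑ ω, P ω s = 1 := by
    have h := Finset.add_sum_erase Finset.univ (fun s => ∑ ω, P ω s) (Finset.mem_univ s0)
    linarith [htot, h]
  -- bound BPR
  have hb : flowerBPR τ P ≤ 1 / (n:ℝ) + (1 - ∑ ω, P ω s0) / 2 := by
    unfold flowerBPR
    rw [← Finset.add_sum_erase Finset.univ
      (fun s => if ∃ i, FlowerOpt τ P i s then (⨆ i, P i s) else 0) (Finset.mem_univ s0)]
    have h1 : (if ∃ i, FlowerOpt τ P i s0 then (⨆ i, P i s0) else 0) ≤ 1 / (n:ℝ) := by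
      rw [if_pos hs0]; exact hsup1 s0
    have h2 : ∑ s ∈ Finset.univ.erase s0,
        (if ∃ i, FlowerOpt τ P i s then (⨆ i, P i s) else 0)
        ≤ ∑ s ∈ Finset.univ.erase s0, (∑ ω, P ω s) / 2 := by
      refine Finset.sum_le_sum fun s _ => ?_
      split_ifs with h
      · exact hsup s h
      · have : (0:ℝ) ≤ ∑ ω, P ω s := Finset.sum_nonneg fun ω _ => hP0 ω s
        linarith
    have h3 : ∑ s ∈ Finset.univ.erase s0, (∑ ω, P ω s) / 2
        = (1 - ∑ ω, P ω s0) / 2 := by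
      rw [← Finset.sum_div]
      linarith [hsplitσ]
    linarith
  rw [hτ] at hb
  linarith
end

section
/- KL-ball containment for the Stackelberg strategy: let n ≥ 4, δ ≤ 1/8, and x ∈ Δ^[n] with x(1) = 1/2 − δ and x(j) = (1/2 + δ)/(n−1) for j ≠ 1. Then any y ∈ Δ^[n] with D_KL(y∥x) ≤ δ²/(2(n−1)) satisfies: y(1) > y(j) for all j ≠ 1, and y(j) ≥ 1/(2(n−1)) for all j. -/
open Real Finset

lemma klF_t (t : ℝ) (ht : 0 < t) : (t-1)^2/(2*(t+1)) ≤ t * Real.log t - t + 1 := by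
  have h1 : 1 - ((t+1)/2)⁻¹ ≤ Real.log ((t+1)/2) :=
    Real.one_sub_inv_le_log_of_pos (by linarith)
  have h2 : 1 - (2*t/(t+1))⁻¹ ≤ Real.log (2*t/(t+1)) :=
    Real.one_sub_inv_le_log_of_pos (by positivity)
  have he : Real.log t = Real.log ((t+1)/2) + Real.log (2*t/(t+1)) := by
    rw [← Real.log_mul (by positivity) (by positivity)]
    congr 1
    field_simp
  have ht1 : (0:ℝ) < t + 1 := by linarith
  have e1 : ((t+1)/2)⁻¹ = 2/(t+1) := by field_simp
  have e2 : (2*t/(t+1))⁻¹ = (t+1)/(2*t) := by rw [inv_div]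
  rw [e1] at h1; rw [e2] at h2
  have hlog : (t-1)/(t+1) + (t-1)/(2*t) ≤ Real.log t := by
    rw [he]
    have a1 : (t-1)/(t+1) = 1 - 2/(t+1) := by field_simp; ring
    have a2 : (t-1)/(2*t) = 1 - (t+1)/(2*t) := by field_simp; ring
    rw [a1, a2]; linarith
  have hmul := mul_le_mul_of_nonneg_left hlog ht.le
  have key : t * ((t-1)/(t+1) + (t-1)/(2*t)) - t + 1 = (t-1)^2/(2*(t+1)) := by
    field_simp
    ring
  linarith [hmul, key.ge, key.le]

lemma klF (a b : ℝ) (ha : 0 ≤ a) (hb : 0 < b) :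
    (a - b)^2 / (2*(a+b)) ≤ a * Real.log (a/b) - a + b := by
  rcases eq_or_lt_of_le ha with h0 | ha'
  · rw [← h0]
    simp [Real.log_zero]
    rw [div_le_iff₀ (by linarith)]
    nlinarith
  · have ht : 0 < a/b := div_pos ha' hb
    have h := klF_t (a/b) ht
    have e1 : a * Real.log (a/b) - a + b = b * ((a/b) * Real.log (a/b) - (a/b) + 1) := by
      field_simp
    have e2 : (a-b)^2/(2*(a+b)) = b * ((a/b - 1)^2 / (2*(a/b+1))) := by
      have hab : (0:ℝ) < a + b := by linarith
      field_simp
    rw [e1, e2]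
    exact mul_le_mul_of_nonneg_left h hb.le

lemma tangent (a p : ℝ) (ha : 0 < a) (hp : 0 < p) :
    p * Real.log p + (1 + Real.log p) * (a - p) ≤ a * Real.log a := by
  have h : 1 - (a/p)⁻¹ ≤ Real.log (a/p) := Real.one_sub_inv_le_log_of_pos (div_pos ha hp)
  rw [Real.log_div ha.ne' hp.ne'] at h
  have h2 := mul_le_mul_of_nonneg_left h ha.le
  have e : a * (1 - (a/p)⁻¹) = a - p := by field_simp
  rw [e] at h2
  nlinarith [h2]

lemma lemM (a p b : ℝ) (ha : 0 ≤ a) (hp : 0 < p) (hb : 0 < b) :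
    p * Real.log (p/b) - p + b + (p - a) * Real.log (b/p) ≤ a * Real.log (a/b) - a + b := by
  rw [Real.log_div hp.ne' hb.ne', Real.log_div hb.ne' hp.ne']
  rcases eq_or_lt_of_le ha with h0 | ha'
  · rw [← h0]; simp [Real.log_zero]; nlinarith [Real.log_zero]
  · rw [Real.log_div ha'.ne' hb.ne']
    have := tangent a p ha' hp
    nlinarith [this]

lemma logdelta (δ : ℝ) (h0 : 0 ≤ δ) (h1 : δ ≤ 1/8) :
    Real.log (1+2*δ) ≤ 2*δ - δ^2 := by
  have d1 : (0:ℝ) < 1 + 2*δ/3 := by linarith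
  have d2 : (0:ℝ) < 1 + 4*δ/3 := by linarith
  have d3 : (0:ℝ) < 1 + 2*δ := by linarith
  have l1 : Real.log (1+2*δ/3) ≤ 2*δ/3 := by
    have := Real.log_le_sub_one_of_pos d1; linarith
  have l2 : Real.log ((1+4*δ/3)/(1+2*δ/3)) ≤ (1+4*δ/3)/(1+2*δ/3) - 1 :=
    Real.log_le_sub_one_of_pos (by positivity)
  have l3 : Real.log ((1+2*δ)/(1+4*δ/3)) ≤ (1+2*δ)/(1+4*δ/3) - 1 :=
    Real.log_le_sub_one_of_pos (by positivity)
  rw [Real.log_div d2.ne' d1.ne'] at l2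
  rw [Real.log_div d3.ne' d2.ne'] at l3
  have b2 : (1+4*δ/3)/(1+2*δ/3) - 1 = (2*δ/3)/(1+2*δ/3) := by field_simp; ring
  have b3 : (1+2*δ)/(1+4*δ/3) - 1 = (2*δ/3)/(1+4*δ/3) := by field_simp; ring
  rw [b2] at l2; rw [b3] at l3
  have c2 : (2*δ/3)/(1+2*δ/3) ≤ (2*δ/3)*(1 - 2*δ/3 + 4*δ^2/9) := by
    rw [div_le_iff₀ d1]; nlinarith
  have c3 : (2*δ/3)/(1+4*δ/3) ≤ (2*δ/3)*(1 - 4*δ/3 + 16*δ^2/9) := by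
    rw [div_le_iff₀ d2]; nlinarith
  nlinarith [l1, l2, l3, c2, c3]

set_option maxHeartbeats 1000000 in
/-- KL-ball containment for the Stackelberg strategy: for `n ≥ 4`, `δ ≤ 1/8`,
and `x ∈ Δ^[n]` with `x i₀ = 1/2 − δ` and `x j = (1/2 + δ)/(n−1)` for `j ≠ i₀`,
every `y ∈ Δ^[n]` with `D_KL(y ∥ x) ≤ δ²/(2(n−1))` has `y i₀` strictly largest
and all coordinates at least `1/(2(n−1))`. -/
theorem stackelberg_kl_ball (n : ℕ) (hn : 4 ≤ n) (i₀ : Fin n) (δ : ℝ) (hδ0 : 0 ≤ δ) (hδ1 : δ ≤ 1 / 8)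
    (x : Fin n → ℝ)
    (hx1 : x i₀ = 1 / 2 - δ)
    (hxj : ∀ j : Fin n, j ≠ i₀ → x j = (1 / 2 + δ) / ((n : ℝ) - 1))
    (y : Fin n → ℝ) (hy0 : ∀ i, 0 ≤ y i) (hy1 : ∑ i, y i = 1)
    (hKL : ∑ i, y i * Real.log (y i / x i) ≤ δ ^ 2 / (2 * ((n : ℝ) - 1))) :
    (∀ j : Fin n, j ≠ i₀ → y j < y i₀) ∧ (∀ j : Fin n, 1 / (2 * ((n : ℝ) - 1)) ≤ y j) := by
  have hn4 : (4:ℝ) ≤ (n:ℝ) := by exact_mod_cast hn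
  have hN : (3:ℝ) ≤ (n:ℝ) - 1 := by linarith
  have hN0 : (0:ℝ) < (n:ℝ) - 1 := by linarith
  set ε : ℝ := δ ^ 2 / (2 * ((n : ℝ) - 1)) with hε
  have hε0 : 0 ≤ ε := by positivity
  have hε6 : ε ≤ δ^2/6 := by
    rw [hε, div_le_div_iff₀ (by linarith) (by norm_num)]
    nlinarith [sq_nonneg δ]
  have hx_pos : ∀ i, 0 < x i := by
    intro i
    by_cases h : i = i₀
    · rw [h, hx1]; linarith
    · rw [hxj i h]; positivity
  have hsx : ∑ i, x i = 1 := by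
    rw [← Finset.add_sum_erase _ _ (Finset.mem_univ i₀), hx1]
    have hc : ∀ j ∈ Finset.univ.erase i₀, x j = (1/2 + δ) / ((n : ℝ) - 1) := by
      intro j hj
      exact hxj j (Finset.mem_erase.1 hj).1
    rw [Finset.sum_congr rfl hc, Finset.sum_const, Finset.card_erase_of_mem (Finset.mem_univ i₀),
      Finset.card_univ, Fintype.card_fin, nsmul_eq_mul]
    have hcast : ((n - 1 : ℕ) : ℝ) = (n:ℝ) - 1 := by
      rw [Nat.cast_sub (by omega)]; norm_num
    rw [hcast]
    field_simp
    ring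
  have hterm : ∀ j, y j * Real.log (y j / x j) - y j + x j ≤ ε := by
    intro j
    have hnn : ∀ i ∈ Finset.univ, (0:ℝ) ≤ y i * Real.log (y i / x i) - y i + x i := by
      intro i _
      have h := klF (y i) (x i) (hy0 i) (hx_pos i)
      have : (0:ℝ) ≤ (y i - x i)^2 / (2*(y i + x i)) :=
        div_nonneg (sq_nonneg _) (by linarith [hx_pos i, hy0 i])
      linarith
    have e : ∑ i, (y i * Real.log (y i / x i) - y i + x i)
        = (∑ i, y i * Real.log (y i / x i)) - (∑ i, y i) + (∑ i, x i) := by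
      rw [Finset.sum_add_distrib, Finset.sum_sub_distrib]
    have hsum : ∑ i, (y i * Real.log (y i / x i) - y i + x i) ≤ ε := by
      rw [e, hy1, hsx]; linarith
    exact le_trans (Finset.single_le_sum hnn (Finset.mem_univ j)) hsum
  have hquad : ∀ j, (y j - x j)^2 ≤ ε * (2*(y j + x j)) := by
    intro j
    have h := le_trans (klF (y j) (x j) (hy0 j) (hx_pos j)) (hterm j)
    have hpos : (0:ℝ) < 2*(y j + x j) := by
      have := hx_pos j; have := hy0 j; linarith
    rw [div_le_iff₀ hpos] at h
    linarith
  have hy_le : ∀ j, y j ≤ 1 := by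
    intro j
    calc y j ≤ ∑ i, y i := Finset.single_le_sum (fun i _ => hy0 i) (Finset.mem_univ j)
    _ = 1 := hy1
  -- lower bound on y i₀
  have h0 : 1/2 - 79/50*δ ≤ y i₀ := by
    rcases le_or_gt (x i₀) (y i₀) with h | h
    · rw [hx1] at h; linarith
    · have hq := hquad i₀
      rw [hx1] at hq h
      have hb : (y i₀ - (1/2-δ))^2 ≤ δ^2/3 := by
        have h1 : ε * (2*(y i₀ + (1/2-δ))) ≤ δ^2/6 * (2*(2*(1/2-δ))) := by
          apply mul_le_mul hε6 (by linarith) (by linarith [hy0 i₀, hδ1]) (by positivity)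
        nlinarith [hq, h1, hδ1, hδ0]
      nlinarith [hb, hδ0]
  have hp6 : 1/(2*((n:ℝ)-1)) ≤ 1/6 := by
    rw [div_le_div_iff₀ (by linarith) (by norm_num)]; linarith
  constructor
  · intro j hj
    have hq := hquad j
    rw [hxj j hj] at hq
    by_contra hcon
    push_neg at hcon
    have hA : 1/2 - 79/50*δ ≤ y j := le_trans h0 hcon
    have hxq1 : (1/2+δ)/((n:ℝ)-1) ≤ 1/6 + δ/3 := by
      rw [div_le_iff₀ hN0]; nlinarith
    have hxq0 : 0 < (1/2+δ)/((n:ℝ)-1) := by positivity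
    have hrhs : ε * (2*(y j + (1/2+δ)/((n:ℝ)-1))) ≤ δ^2/6 * (2*(1 + (1/6+δ/3))) := by
      apply mul_le_mul hε6 (by linarith [hy_le j]) (by linarith [hy0 j]) (by positivity)
    have hlow : 1/3 - 287/150*δ ≤ y j - (1/2+δ)/((n:ℝ)-1) := by linarith
    have hlow0 : (0:ℝ) ≤ 1/3 - 287/150*δ := by linarith
    have hsq : (1/3 - 287/150*δ)^2 ≤ (y j - (1/2+δ)/((n:ℝ)-1))^2 :=
      pow_le_pow_left₀ hlow0 hlow 2
    have hfin : (1/3 - 287/150*δ)^2 ≤ δ^2/6*(2*(1+(1/6+δ/3))) := by linarith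
    nlinarith [hfin, sq_nonneg (1/8 - δ), mul_nonneg (sub_nonneg.2 hδ1) hδ0, sq_nonneg δ,
      mul_nonneg (mul_nonneg (sub_nonneg.2 hδ1) hδ0) hδ0]
  · intro j
    by_cases hj : j = i₀
    · rw [hj]; linarith [h0, hp6, hδ1]
    · have hq := hquad j
      rw [hxj j hj] at hq
      set p : ℝ := 1/(2*((n:ℝ)-1)) with hp
      have hp0 : 0 < p := by rw [hp]; positivity
      set q : ℝ := (1/2+δ)/((n:ℝ)-1) with hqdef
      have hq0 : 0 < q := by rw [hqdef]; positivity
      rcases eq_or_lt_of_le hδ0 with hδz | hδpos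
      · -- δ = 0
        have hqp : q = p := by rw [hqdef, hp, ← hδz, add_zero, div_div]
        have hε_z : ε = 0 := by rw [hε, ← hδz]; ring
        rw [hε_z] at hq
        have : y j = q := by nlinarith [sq_nonneg (y j - q)]
        rw [this, hqp]
      · -- δ > 0
        have hqp2 : q - p = 2*δ*p := by
          rw [hqdef, hp]; field_simp; ring
        have hratio : q/p = 1 + 2*δ := by
          rw [hqdef, hp]; field_simp
        have hM := lemM (y j) p q (hy0 j) hp0 hq0
        have hrpq : p/q = (1+2*δ)⁻¹ := by
          rw [← hratio]; rw [inv_div]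
        have hlogq : Real.log (q/p) = Real.log (1+2*δ) := by rw [hratio]
        have hlogp : Real.log (p/q) = - Real.log (1+2*δ) := by
          rw [hrpq, Real.log_inv]
        have hfp : p * Real.log (p/q) - p + q = p * (2*δ - Real.log (1+2*δ)) := by
          rw [hlogp]; nlinarith [hqp2]
        have hεp : ε = p * δ^2 := by rw [hε, hp]; field_simp
        have hld := logdelta δ hδ0 hδ1
        have hfp_ge : ε ≤ p * Real.log (p/q) - p + q := by
          rw [hfp, hεp]
          apply mul_le_mul_of_nonneg_left (by linarith) hp0.le
        have hterm_j := hterm j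
        rw [hxj j hj] at hterm_j
        have hprod : (p - y j) * Real.log (q/p) ≤ 0 := by linarith [hM, hfp_ge, hterm_j]
        have hlogpos : 0 < Real.log (q/p) := by
          rw [hlogq]; apply Real.log_pos; linarith
        nlinarith [hprod, hlogpos]
end
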